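/- arXiv:2110.15572 — 2 statements merged into one kernel-verified Lean document; each statement's English description precedes it below -/
import Mathlib

section
/- GNPG upper bound with exact gradients: define θ_{t+1} := θ_t + (1/6)·g_t/‖g_t‖₂ for all t ≥ 1, where g_t := d(π_{θ_t}ᵀ r)/dθ_t (these gradients are nonzero because π_{θ_t} has full support and r is non-constant). Let c := inf_{t ≥ 1} π_{θ_t}(a*). If c > 0, then for all t ≥ 1, (π* − π_{θ_t})ᵀ r ≤ (π* − π_{θ_1})ᵀ r · exp(−c·(t − 1)/12). Moreover, if π_{θ_1}(a) = 1/K for all a, then c ≥ 1/K. -/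
open Finset Real Filter

/-- Softmax policy: `π_θ(a) = exp(θ(a)) / Σ_{a'} exp(θ(a'))`. -/
noncomputable def softmax {K : ℕ} (θ : Fin K → ℝ) (a : Fin K) : ℝ :=
  Real.exp (θ a) / ∑ a', Real.exp (θ a')

/-- Expected reward `π_θᵀ r`. -/
noncomputable def expReward {K : ℕ} (r θ : Fin K → ℝ) : ℝ :=
  ∑ a, softmax θ a * r a

/-- Policy gradient component `(d π_θᵀ r / dθ)(a) = π_θ(a)·(r(a) − π_θᵀ r)`. -/
noncomputable def pgrad {K : ℕ} (r θ : Fin K → ℝ) (a : Fin K) : ℝ :=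
  softmax θ a * (r a - expReward r θ)

/-- Euclidean norm of the policy gradient. -/
noncomputable def pgradNorm {K : ℕ} (r θ : Fin K → ℝ) : ℝ :=
  Real.sqrt (∑ a, pgrad r θ a ^ 2)

/-!
Write `g` for the policy gradient and `u = η g / ‖g‖` for the normalised step, so `|u a| ≤ η`.
Reweighting the softmax by `e^u` raises the expected reward by
`(Σ e^{u a} g a) / (Σ π_θ(a) e^{u a})`. By `|e^v - 1 - v| ≤ v²`, `Σ g = 0` and `Σ u g = η ‖g‖`
the numerator is at least `(η - η²) ‖g‖`, while the denominator is at most `e^η`; for `η = 1/6`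
the ascent is at least `‖g‖ / 12`. Since `‖g‖ ≥ g(a*) = π_θ(a*) (r(a*) - π_θᵀ r)`, each step
contracts the sub-optimality by `1 - c/12 ≤ e^{-c/12}`. For the lower bound on `c`: `g(a) ≤ g(a*)`
whenever `θ(a) ≤ θ(a*)`, so `a*` keeps the largest logit along the iteration, whence
`π_θ(a*) ≥ 1/K`.
-/

noncomputable def gnpgStep {K : ℕ} (η : ℝ) (r θ : Fin K → ℝ) : Fin K → ℝ :=
  fun a => θ a + η * (pgrad r θ a / pgradNorm r θ)

section Softmax

variable {K : ℕ} [Nonempty (Fin K)] (θ : Fin K → ℝ)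

lemma sum_exp_pos : 0 < ∑ a, exp (θ a) :=
  sum_pos (fun _ _ => exp_pos _) univ_nonempty

lemma softmax_pos (a : Fin K) : 0 < softmax θ a :=
  div_pos (exp_pos _) (sum_exp_pos θ)

lemma sum_softmax : ∑ a, softmax θ a = 1 := by
  simp only [softmax, ← sum_div]
  exact div_self (sum_exp_pos θ).ne'

lemma softmax_le_softmax_iff {a b : Fin K} : softmax θ a ≤ softmax θ b ↔ θ a ≤ θ b := by
  rw [softmax, softmax, div_le_div_iff_of_pos_right (sum_exp_pos θ), exp_le_exp]

lemma inv_card_le_softmax {b : Fin K} (hb : ∀ a, θ a ≤ θ b) : 1 / (K : ℝ) ≤ softmax θ b := by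
  have hsum : (1 : ℝ) ≤ K * softmax θ b :=
    calc (1 : ℝ) = ∑ a, softmax θ a := (sum_softmax θ).symm
      _ ≤ ∑ _a : Fin K, softmax θ b :=
        sum_le_sum fun a _ => (softmax_le_softmax_iff θ).2 (hb a)
      _ = K * softmax θ b := by simp
  rw [div_le_iff₀ (by simpa using Fintype.card_pos (α := Fin K))]
  linarith

lemma softmax_add (u : Fin K → ℝ) (a : Fin K) :
    softmax (fun b => θ b + u b) a = softmax θ a * exp (u a) / ∑ b, softmax θ b * exp (u b) := by
  have hZ := (sum_exp_pos θ).ne'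
  simp only [softmax, exp_add, div_mul_eq_mul_div, ← sum_div]
  rw [div_div_div_cancel_right₀ hZ]

end Softmax

section PolicyGradient

variable {K : ℕ} (r θ : Fin K → ℝ)

lemma abs_pgrad_le_pgradNorm (a : Fin K) : |pgrad r θ a| ≤ pgradNorm r θ := by
  rw [pgradNorm, ← sqrt_sq_eq_abs]
  exact sqrt_le_sqrt (single_le_sum (f := fun b => pgrad r θ b ^ 2)
    (fun b _ => sq_nonneg _) (mem_univ a))

lemma sum_pgrad_sq : ∑ a, pgrad r θ a ^ 2 = pgradNorm r θ ^ 2 :=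
  (sq_sqrt (sum_nonneg fun _ _ => sq_nonneg _)).symm

variable [Nonempty (Fin K)]

lemma sum_pgrad : ∑ a, pgrad r θ a = 0 := by
  simp only [pgrad, mul_sub, sum_sub_distrib, ← sum_mul, sum_softmax, one_mul]
  exact sub_self _

lemma expReward_le {astar : Fin K} (hmax : ∀ a, r a ≤ r astar) : expReward r θ ≤ r astar :=
  calc expReward r θ ≤ ∑ a, softmax θ a * r astar :=
        sum_le_sum fun a _ => mul_le_mul_of_nonneg_left (hmax a) (softmax_pos θ a).le
    _ = r astar := by rw [← sum_mul, sum_softmax, one_mul]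

lemma pgrad_le_pgrad {astar : Fin K} (hmax : ∀ a, r a ≤ r astar) {b : Fin K}
    (hb : θ b ≤ θ astar) : pgrad r θ b ≤ pgrad r θ astar := by
  have hgap := sub_nonneg.2 (expReward_le r θ hmax)
  rcases le_total (r b) (expReward r θ) with hle | hge
  · exact (mul_nonpos_of_nonneg_of_nonpos (softmax_pos θ b).le (sub_nonpos.2 hle)).trans
      (mul_nonneg (softmax_pos θ astar).le hgap)
  · exact mul_le_mul ((softmax_le_softmax_iff θ).2 hb) (sub_le_sub_right (hmax b) _)
      (sub_nonneg.2 hge) (softmax_pos θ astar).le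

lemma expReward_add_sub_expReward (u : Fin K → ℝ) :
    expReward r (fun a => θ a + u a) - expReward r θ =
      (∑ a, exp (u a) * pgrad r θ a) / ∑ a, softmax θ a * exp (u a) := by
  have hD : 0 < ∑ a, softmax θ a * exp (u a) :=
    sum_pos (fun a _ => mul_pos (softmax_pos θ a) (exp_pos _)) univ_nonempty
  have hnum : ∑ a, exp (u a) * pgrad r θ a =
      ∑ a, softmax θ a * exp (u a) * r a - expReward r θ * ∑ a, softmax θ a * exp (u a) := by
    simp only [pgrad, mul_sum, ← sum_sub_distrib]
    exact sum_congr rfl fun a _ => by ring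
  rw [hnum, sub_div, mul_div_cancel_right₀ _ hD.ne']
  simp only [expReward, softmax_add, div_mul_eq_mul_div, ← sum_div]

end PolicyGradient

lemma add_mul_le_exp_mul {v g η : ℝ} (hv : |v| ≤ η) (hη : η ≤ 1) (hvg : 0 ≤ v * g) :
    g + (1 - η) * (v * g) ≤ exp v * g := by
  have hquad : |(exp v - 1 - v) * g| ≤ v ^ 2 * |g| := by
    rw [abs_mul]
    exact mul_le_mul_of_nonneg_right (abs_exp_sub_one_sub_id_le (hv.trans hη)) (abs_nonneg g)
  have hvg' : v ^ 2 * |g| ≤ η * (v * g) := by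
    calc v ^ 2 * |g| = |v| * (v * g) := by rw [← abs_of_nonneg hvg, abs_mul, ← sq_abs]; ring
      _ ≤ η * (v * g) := mul_le_mul_of_nonneg_right hv hvg
  linarith [neg_abs_le ((exp v - 1 - v) * g)]

section Ascent

variable {K : ℕ} [Nonempty (Fin K)] (r θ : Fin K → ℝ) {η : ℝ}

lemma sub_sq_mul_pgradNorm_le (hη₀ : 0 ≤ η) (hη₁ : η ≤ 1) :
    (η - η ^ 2) * pgradNorm r θ ≤
      exp η * (expReward r (gnpgStep η r θ) - expReward r θ) := by
  set G := pgradNorm r θ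
  set u : Fin K → ℝ := fun a => η * (pgrad r θ a / G)
  have hG : 0 ≤ G := sqrt_nonneg _
  have hu : ∀ a, |u a| ≤ η := fun a => by
    rw [abs_mul, abs_of_nonneg hη₀, abs_div, abs_of_nonneg hG]
    exact mul_le_of_le_one_right hη₀ (div_le_one_of_le₀ (abs_pgrad_le_pgradNorm r θ a) hG)
  have hug : ∀ a, 0 ≤ u a * pgrad r θ a := fun a => by
    have : u a * pgrad r θ a = η / G * pgrad r θ a ^ 2 := by ring
    rw [this]; positivity
  have hsum_ug : ∑ a, u a * pgrad r θ a = η * G := by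
    calc ∑ a, u a * pgrad r θ a = η / G * ∑ a, pgrad r θ a ^ 2 := by
          rw [mul_sum]; exact sum_congr rfl fun a _ => by ring
      _ = η / G * G ^ 2 := by rw [sum_pgrad_sq]
      _ = η * G := by
          rcases hG.eq_or_lt with h | h
          · simp [← h]
          · field_simp
  have hnum : (η - η ^ 2) * G ≤ ∑ a, exp (u a) * pgrad r θ a :=
    calc (η - η ^ 2) * G = ∑ a, (pgrad r θ a + (1 - η) * (u a * pgrad r θ a)) := by
          rw [sum_add_distrib, ← mul_sum, sum_pgrad, hsum_ug]; ring
      _ ≤ _ := sum_le_sum fun a _ => add_mul_le_exp_mul (hu a) hη₁ (hug a)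
  have hden : ∑ a, softmax θ a * exp (u a) ≤ exp η :=
    calc ∑ a, softmax θ a * exp (u a) ≤ ∑ a, softmax θ a * exp η :=
          sum_le_sum fun a _ => mul_le_mul_of_nonneg_left
            (exp_le_exp.2 (le_abs_self _ |>.trans (hu a))) (softmax_pos θ a).le
      _ = exp η := by rw [← sum_mul, sum_softmax, one_mul]
  have hD : 0 < ∑ a, softmax θ a * exp (u a) :=
    sum_pos (fun a _ => mul_pos (softmax_pos θ a) (exp_pos _)) univ_nonempty
  have hnum₀ : 0 ≤ ∑ a, exp (u a) * pgrad r θ a :=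
    (mul_nonneg (by nlinarith) hG).trans hnum
  rw [show gnpgStep η r θ = fun a => θ a + u a from rfl, expReward_add_sub_expReward]
  calc (η - η ^ 2) * G ≤ ∑ a, exp (u a) * pgrad r θ a := hnum
    _ = (∑ a, softmax θ a * exp (u a)) *
          ((∑ a, exp (u a) * pgrad r θ a) / ∑ a, softmax θ a * exp (u a)) :=
        (mul_div_cancel₀ _ hD.ne').symm
    _ ≤ _ := mul_le_mul_of_nonneg_right hden (div_nonneg hnum₀ hD.le)

lemma pgradNorm_div_twelve_le :
    pgradNorm r θ / 12 ≤ expReward r (gnpgStep (1 / 6) r θ) - expReward r θ := by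
  have hascent := sub_sq_mul_pgradNorm_le r θ (η := 1 / 6) (by norm_num) (by norm_num)
  have hexp : exp (1 / 6) ≤ 5 / 3 := by
    have := (abs_le.1 (abs_exp_sub_one_sub_id_le (x := 1 / 6) (by norm_num [abs_of_pos]))).2
    linarith
  have hG : 0 ≤ pgradNorm r θ := sqrt_nonneg _
  nlinarith [exp_pos (1 / 6 : ℝ)]

lemma sub_expReward_gnpgStep_le {astar : Fin K} (hmax : ∀ a, r a ≤ r astar) {c : ℝ}
    (hc : c ≤ softmax θ astar) :
    r astar - expReward r (gnpgStep (1 / 6) r θ) ≤ exp (-c / 12) * (r astar - expReward r θ) := by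
  have hgap := sub_nonneg.2 (expReward_le r θ hmax)
  have hG : c * (r astar - expReward r θ) ≤ pgradNorm r θ :=
    calc c * (r astar - expReward r θ) ≤ pgrad r θ astar := mul_le_mul_of_nonneg_right hc hgap
      _ ≤ pgradNorm r θ := (le_abs_self _).trans (abs_pgrad_le_pgradNorm r θ astar)
  have hexp : 1 - c / 12 ≤ exp (-c / 12) := by linarith [add_one_le_exp (-c / 12)]
  nlinarith [pgradNorm_div_twelve_le r θ, mul_le_mul_of_nonneg_right hexp hgap]

lemma gnpgStep_le_gnpgStep (hη : 0 ≤ η) {astar : Fin K} (hmax : ∀ a, r a ≤ r astar) {b : Fin K}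
    (hb : θ b ≤ θ astar) : gnpgStep η r θ b ≤ gnpgStep η r θ astar :=
  add_le_add hb (mul_le_mul_of_nonneg_left
    (div_le_div_of_nonneg_right (pgrad_le_pgrad r θ hmax hb) (sqrt_nonneg _)) hη)

end Ascent

theorem gnpg_true_gradient_upper_bound_general
    {K : ℕ} (r : Fin K → ℝ)
    (astar : Fin K) (hstar : ∀ a, a ≠ astar → r a < r astar)
    (θ : ℕ → Fin K → ℝ)
    (hupd : ∀ t, θ (t + 1) = fun a => θ t a + (1 / 6) * (pgrad r (θ t) a / pgradNorm r (θ t)))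
    (c : ℝ) (hc : c = ⨅ t : ℕ, softmax (θ t) astar) :
    (0 < c →
      ∀ t : ℕ, r astar - expReward r (θ t) ≤
        (r astar - expReward r (θ 0)) * Real.exp (-(c * t) / 12)) ∧
    ((∀ a, softmax (θ 0) a = 1 / K) → 1 / (K : ℝ) ≤ c) := by
  have : Nonempty (Fin K) := ⟨astar⟩
  have hmax : ∀ a, r a ≤ r astar := fun a =>
    (eq_or_ne a astar).elim (fun h => h ▸ le_rfl) fun h => (hstar a h).le
  have hstep : ∀ t, θ (t + 1) = gnpgStep (1 / 6) r (θ t) := hupd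
  refine ⟨fun _ t => ?_, fun hunif => ?_⟩
  · have hc_le : ∀ t, c ≤ softmax (θ t) astar := fun t =>
      hc ▸ ciInf_le ⟨0, by rintro _ ⟨s, rfl⟩; exact (softmax_pos _ _).le⟩ t
    have := le_geom (u := fun t => r astar - expReward r (θ t)) (exp_pos (-c / 12)).le t
      fun k _ => hstep k ▸ sub_expReward_gnpgStep_le r (θ k) hmax (hc_le k)
    rwa [← exp_nat_mul, mul_comm, mul_div_assoc', mul_neg, mul_comm (t : ℝ)] at this
  · have hlead : ∀ t b, θ t b ≤ θ t astar := by
      intro t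
      induction t with
      | zero => exact fun b => (softmax_le_softmax_iff _).1 (by rw [hunif, hunif])
      | succ t ih => exact fun b => hstep t ▸ gnpgStep_le_gnpgStep r (θ t) (by norm_num) hmax (ih b)
    rw [hc]
    exact le_ciInf fun t => inv_card_le_softmax _ (hlead t)

/-- GNPG upper bound with exact gradients, learning rate `1/6`.
Here `θ 0` is the paper's `θ_1`, so the paper's `θ_t` is `θ (t-1)` and the
rate `e^{−c(t−1)/12}` becomes `e^{−c·t/12}`. If `c = inf_t π_{θ_t}(a*) > 0` then
`(π* − π_{θ_t})ᵀ r ≤ (π* − π_{θ_1})ᵀ r · e^{−c(t−1)/12}`; with uniform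
initialization, `c ≥ 1/K`. -/
theorem gnpg_true_gradient_upper_bound
    {K : ℕ} (hK : 2 ≤ K) (r : Fin K → ℝ)
    (hr : ∀ a, 0 < r a ∧ r a ≤ 1)
    (astar : Fin K) (hstar : ∀ a, a ≠ astar → r a < r astar)
    (θ : ℕ → Fin K → ℝ)
    (hupd : ∀ t, θ (t + 1) = fun a => θ t a + (1 / 6) * (pgrad r (θ t) a / pgradNorm r (θ t)))
    (c : ℝ) (hc : c = ⨅ t : ℕ, softmax (θ t) astar) :
    (0 < c →
      ∀ t : ℕ, r astar - expReward r (θ t) ≤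
        (r astar - expReward r (θ 0)) * Real.exp (-(c * t) / 12)) ∧
    ((∀ a, softmax (θ 0) a = 1 / K) → 1 / (K : ℝ) ≤ c) :=
  gnpg_true_gradient_upper_bound_general r astar hstar θ hupd c hc
end

section
/- The on-policy IS stochastic softmax policy gradient is unbiased and has bounded second moment: for every θ ∈ ℝ^K, (i) Σ_{a∈[K]} π_θ(a)·g_a(θ) = d(π_θᵀ r)/dθ, i.e. Σ_a π_θ(a)·g_a(θ)(i) = π_θ(i)·(r(i) − π_θᵀ r) for every coordinate i ∈ [K]; and (ii) Σ_{a∈[K]} π_θ(a)·‖g_a(θ)‖₂² ≤ 2. -/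
open Finset Real Filter

/-- On-policy IS stochastic softmax policy gradient for sampled action `a`:
`g_a(θ)(i) = π_θ(i)·(r̂_a(i) − π_θᵀ r̂_a) = 1{i = a}·r(a) − π_θ(i)·r(a)`. -/
noncomputable def stochPG {K : ℕ} (r : Fin K → ℝ) (a : Fin K) (θ : Fin K → ℝ)
    (i : Fin K) : ℝ :=
  (if i = a then r a else 0) - softmax θ i * r a

/-!
Writing `e_a` for the `a`-th basis vector, `g_a(θ) = r(a) • (e_a - π_θ)`. Averaging over `a ~ π_θ`
gives `π_θ(i) r(i) - π_θ(i) (π_θᵀ r)`, the exact gradient. For the second moment,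
`‖e_a - π_θ‖² = 1 - 2 π_θ(a) + ‖π_θ‖² ≤ 2` because `‖π_θ‖² ≤ Σ_i π_θ(i) ≤ 1`, and `r(a)² ≤ 1`.
-/

section Softmax

variable {K : ℕ} (θ : Fin K → ℝ)

lemma softmax_nonneg (a : Fin K) : 0 ≤ softmax θ a :=
  div_nonneg (exp_pos _).le (sum_nonneg fun _ _ => (exp_pos _).le)

-- Not `= 1`: for `K = 0` the normalizer is `0` and `0 / 0 = 0`.
lemma sum_softmax_le_one : ∑ a, softmax θ a ≤ 1 := by
  simp only [softmax, ← sum_div]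
  exact div_self_le_one _

lemma softmax_le_one (a : Fin K) : softmax θ a ≤ 1 :=
  (single_le_sum (fun i _ => softmax_nonneg θ i) (mem_univ a)).trans (sum_softmax_le_one θ)

lemma sum_softmax_sq_le_one : ∑ i, softmax θ i ^ 2 ≤ 1 :=
  calc ∑ i, softmax θ i ^ 2 ≤ ∑ i, softmax θ i :=
        sum_le_sum fun i _ => pow_le_of_le_one (softmax_nonneg θ i) (softmax_le_one θ i) two_ne_zero
    _ ≤ 1 := sum_softmax_le_one θ

end Softmax

section StochPG

variable {K : ℕ} (r : Fin K → ℝ) (θ : Fin K → ℝ)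

lemma sum_softmax_mul_stochPG (i : Fin K) :
    ∑ a, softmax θ a * stochPG r a θ i = pgrad r θ i := by
  simp only [stochPG, pgrad, expReward, mul_sub, sum_sub_distrib, mul_ite, mul_zero,
    sum_ite_eq, mem_univ, if_true, mul_sum]
  congr 1
  exact sum_congr rfl fun a _ => by ring

lemma stochPG_eq_mul (a i : Fin K) :
    stochPG r a θ i = r a * ((if i = a then 1 else 0) - softmax θ i) := by
  rw [stochPG, mul_sub, mul_ite, mul_one, mul_zero, mul_comm]

lemma sum_stochPG_sq (a : Fin K) :
    ∑ i, stochPG r a θ i ^ 2 = r a ^ 2 * (1 - 2 * softmax θ a + ∑ i, softmax θ i ^ 2) := by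
  have h_expand : ∀ i, stochPG r a θ i ^ 2 = r a ^ 2 *
      ((if i = a then 1 - 2 * softmax θ a else 0) + softmax θ i ^ 2) := by
    intro i
    rw [stochPG_eq_mul]
    split_ifs with h
    · subst h; ring
    · ring
  simp only [h_expand, ← mul_sum, sum_add_distrib, sum_ite_eq', mem_univ, if_true]

lemma sum_stochPG_sq_le_two {a : Fin K} (hr : |r a| ≤ 1) : ∑ i, stochPG r a θ i ^ 2 ≤ 2 := by
  have hr2 : r a ^ 2 ≤ 1 := by rwa [sq_le_one_iff_abs_le_one]
  have h_norm : 1 - 2 * softmax θ a + ∑ i, softmax θ i ^ 2 ≤ 2 := by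
    linarith [softmax_nonneg θ a, sum_softmax_sq_le_one θ]
  calc ∑ i, stochPG r a θ i ^ 2 ≤ r a ^ 2 * 2 := by
        rw [sum_stochPG_sq]
        exact mul_le_mul_of_nonneg_left h_norm (sq_nonneg _)
    _ ≤ 2 := by linarith

end StochPG

theorem stochastic_softmax_pg_unbiased_bounded_general
    {K : ℕ} (r : Fin K → ℝ)
    (hr : ∀ a, 0 < r a ∧ r a ≤ 1)
    (θ : Fin K → ℝ) :
    (∀ i, ∑ a, softmax θ a * stochPG r a θ i = pgrad r θ i) ∧
    ∑ a, softmax θ a * (∑ i, stochPG r a θ i ^ 2) ≤ 2 := by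
  refine ⟨sum_softmax_mul_stochPG r θ, ?_⟩
  have h_abs : ∀ a, |r a| ≤ 1 := fun a => abs_le.mpr ⟨by linarith [(hr a).1], (hr a).2⟩
  calc ∑ a, softmax θ a * (∑ i, stochPG r a θ i ^ 2) ≤ ∑ a, softmax θ a * 2 :=
        sum_le_sum fun a _ =>
          mul_le_mul_of_nonneg_left (sum_stochPG_sq_le_two r θ (h_abs a)) (softmax_nonneg θ a)
    _ = 2 * ∑ a, softmax θ a := by rw [← sum_mul, mul_comm]
    _ ≤ 2 := by linarith [sum_softmax_le_one θ]

/-- The on-policy IS stochastic softmax policy gradient is unbiased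
(`Σ_a π_θ(a)·g_a(θ) = d(π_θᵀ r)/dθ` componentwise) and has second moment
bounded by `2` (`Σ_a π_θ(a)·‖g_a(θ)‖₂² ≤ 2`). -/
theorem stochastic_softmax_pg_unbiased_bounded
    {K : ℕ} (hK : 2 ≤ K) (r : Fin K → ℝ)
    (hr : ∀ a, 0 < r a ∧ r a ≤ 1)
    (θ : Fin K → ℝ) :
    (∀ i, ∑ a, softmax θ a * stochPG r a θ i = pgrad r θ i) ∧
    ∑ a, softmax θ a * (∑ i, stochPG r a θ i ^ 2) ≤ 2 :=
  stochastic_softmax_pg_unbiased_bounded_general r hr θ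
end
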